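/- arXiv:2002.05048 — 2 statements merged into one kernel-verified Lean document; each statement's English description precedes it below -/
import Mathlib

section
/- Consider a finite probability space with events A (case) and U = Aᶜ (control) with π = P(A) ∈ (0,1), and a random genotype at a causal variant taking values (A_kA_l) for k,l ∈ {1,2}. Suppose the genotype at a marker M is conditionally independent of the case/control status given the genotype at the causal variant, i.e. P(M_iM_j | A_kA_l, A) = P(M_iM_j | A_kA_l). Let p_{kl} = P(A_kA_l), π_{kl} = P(A | A_kA_l) with π₁₂ = π₂₁, q_{ij} = P(M_iM_j), and D_{klij} = P(A_kA_lM_iM_j) - p_{kl}q_{ij}. Then P(M_iM_j | A) = q_{ij} + D₁₁ᵢⱼ(π₁₁-π₁₂)/π + D₂₂ᵢⱼ(π₂₂-π₁₂)/π. -/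
/-!
Split every event along the genotype `G` at the causal variant. Conditional independence gives
`P(M_ij ∩ A) = ∑ P(M_ij ∩ G_kl) π_kl`, while `π = ∑ p_kl π_kl` and `q_ij = ∑ P(M_ij ∩ G_kl)`.
Hence `P(M_ij ∩ A) - q_ij π = ∑ D_klij π_kl`, and since `∑_kl D_klij = q_ij - q_ij = 0` the
weights `π_kl` may be shifted by `π₁₂`; the heterozygote terms then vanish because `π₁₂ = π₂₁`.
-/

open MeasureTheory

theorem Finset.sum_mul_sub_sum_mul_sum_eq {ι R : Type*} [Fintype ι] [CommRing R]
    (a p c : ι → R) (t : R) (hp : ∑ i, p i = 1) :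
    ∑ i, a i * c i - (∑ i, a i) * ∑ i, p i * c i
      = ∑ i, (a i - p i * ∑ j, a j) * (c i - t) := by
  simp only [sub_mul, mul_sub, Finset.sum_sub_distrib, ← Finset.sum_mul, ← Finset.mul_sum, hp,
    mul_assoc, mul_comm (p _)]
  ring

section

variable {Ω ι : Type*} [MeasurableSpace Ω] {μ : Measure Ω} [IsFiniteMeasure μ]

theorem measureReal_eq_sum_inter_preimage [Fintype ι] [MeasurableSpace ι]
    [MeasurableSingletonClass ι] {G : Ω → ι} (hG : Measurable G) (s : Set Ω) :
    μ.real s = ∑ v, μ.real (s ∩ G ⁻¹' {v}) := by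
  have hfib : ∀ v ∈ (Finset.univ : Finset ι), MeasurableSet (G ⁻¹' {v}) :=
    fun v _ => hG (measurableSet_singleton v)
  have := sum_measureReal_preimage_singleton (μ := μ.restrict s) Finset.univ hfib
  simp only [Finset.coe_univ, Set.preimage_univ, measureReal_restrict_apply_univ] at this
  rw [← this]
  exact Finset.sum_congr rfl fun v hv => by
    rw [measureReal_restrict_apply (hfib v hv), Set.inter_comm]

theorem measureReal_inter_eq_mul_div_self (s b : Set Ω) :
    μ.real (s ∩ b) = μ.real b * (μ.real (s ∩ b) / μ.real b) :=
  (mul_div_cancel_of_imp' fun hb => measureReal_mono_null Set.inter_subset_right hb).symm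

/-- When `μ.real b = 0` the junk value `x / 0 = 0` still matches the left side, which is null. -/
theorem measureReal_inter_inter_eq_mul_div {e b a : Set Ω}
    (hind : μ.real (e ∩ b ∩ a) * μ.real b = μ.real (e ∩ b) * μ.real (b ∩ a)) :
    μ.real (e ∩ b ∩ a) = μ.real (e ∩ b) * (μ.real (a ∩ b) / μ.real b) := by
  by_cases hb : μ.real b = 0
  · rw [hb, div_zero, mul_zero]
    exact measureReal_mono_null (Set.inter_subset_left.trans Set.inter_subset_right) hb
  · rw [mul_div_assoc', eq_div_iff hb, hind, Set.inter_comm a]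

end

theorem stmt_3_general
    {Ω : Type*} [MeasurableSpace Ω] (μ : Measure Ω) [IsProbabilityMeasure μ]
    (A : Set Ω)
    (G M : Ω → Fin 2 × Fin 2) (hG : Measurable G)
    (π : ℝ) (hπdef : π = (μ A).toReal) (hπ0 : 0 < π)
    (p : Fin 2 × Fin 2 → ℝ) (hp : ∀ kl, p kl = (μ (G ⁻¹' {kl})).toReal)
    (πc : Fin 2 × Fin 2 → ℝ)
    (hπc : ∀ kl, πc kl = (μ (A ∩ G ⁻¹' {kl})).toReal / p kl)
    (hsym : πc (0, 1) = πc (1, 0))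
    (q : Fin 2 × Fin 2 → ℝ) (hq : ∀ ij, q ij = (μ (M ⁻¹' {ij})).toReal)
    (D : Fin 2 × Fin 2 → Fin 2 × Fin 2 → ℝ)
    (hD : ∀ kl ij, D kl ij = (μ (G ⁻¹' {kl} ∩ M ⁻¹' {ij})).toReal - p kl * q ij)
    -- conditional independence of marker genotype and case/control status
    -- given the variant genotype: P(M, G, A) · P(G) = P(M, G) · P(G, A)
    (hci : ∀ kl ij,
      (μ (M ⁻¹' {ij} ∩ G ⁻¹' {kl} ∩ A)).toReal * p kl
        = (μ (M ⁻¹' {ij} ∩ G ⁻¹' {kl})).toReal * (μ (G ⁻¹' {kl} ∩ A)).toReal)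
    (ij : Fin 2 × Fin 2) :
    (μ (M ⁻¹' {ij} ∩ A)).toReal / π
      = q ij + D (0, 0) ij * (πc (0, 0) - πc (0, 1)) / π
          + D (1, 1) ij * (πc (1, 1) - πc (0, 1)) / π := by
  simp only [← measureReal_def] at *
  set a : Fin 2 × Fin 2 → ℝ := fun kl => μ.real (M ⁻¹' {ij} ∩ G ⁻¹' {kl})
  have hcase : μ.real (M ⁻¹' {ij} ∩ A) = ∑ kl, a kl * πc kl := by
    rw [measureReal_eq_sum_inter_preimage hG]
    refine Finset.sum_congr rfl fun kl _ => ?_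
    rw [Set.inter_right_comm, hπc, hp]
    exact measureReal_inter_inter_eq_mul_div (hp kl ▸ hci kl ij)
  have hprev : π = ∑ kl, p kl * πc kl := by
    rw [hπdef, measureReal_eq_sum_inter_preimage hG]
    exact Finset.sum_congr rfl fun kl _ => by
      rw [hπc, hp, ← measureReal_inter_eq_mul_div_self]
  have hmarker : q ij = ∑ kl, a kl := by rw [hq, measureReal_eq_sum_inter_preimage hG]
  have htotal : ∑ kl, p kl = 1 := by
    simpa [← hp] using (measureReal_eq_sum_inter_preimage (μ := μ) hG Set.univ).symm
  have hshift := Finset.sum_mul_sub_sum_mul_sum_eq a p πc (πc (0, 1)) htotal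
  rw [← hcase, ← hmarker, ← hprev] at hshift
  simp only [Fintype.sum_prod_type, Fin.sum_univ_two, ← hsym, sub_self, mul_zero,
    add_zero] at hshift
  rw [hD, hD, Set.inter_comm (G ⁻¹' _), Set.inter_comm (G ⁻¹' _)]
  field_simp
  linear_combination hshift

/-- Lemma 1 of the paper: conditional marker genotype frequency among cases. -/
theorem stmt_3
    {Ω : Type*} [MeasurableSpace Ω] (μ : Measure Ω) [IsProbabilityMeasure μ]
    (A : Set Ω) (hA : MeasurableSet A)
    (G M : Ω → Fin 2 × Fin 2) (hG : Measurable G) (hM : Measurable M)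
    (π : ℝ) (hπdef : π = (μ A).toReal) (hπ0 : 0 < π) (hπ1 : π < 1)
    (p : Fin 2 × Fin 2 → ℝ) (hp : ∀ kl, p kl = (μ (G ⁻¹' {kl})).toReal)
    (πc : Fin 2 × Fin 2 → ℝ)
    (hπc : ∀ kl, πc kl = (μ (A ∩ G ⁻¹' {kl})).toReal / p kl)
    (hsym : πc (0, 1) = πc (1, 0))
    (q : Fin 2 × Fin 2 → ℝ) (hq : ∀ ij, q ij = (μ (M ⁻¹' {ij})).toReal)
    (D : Fin 2 × Fin 2 → Fin 2 × Fin 2 → ℝ)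
    (hD : ∀ kl ij, D kl ij = (μ (G ⁻¹' {kl} ∩ M ⁻¹' {ij})).toReal - p kl * q ij)
    -- conditional independence of marker genotype and case/control status
    -- given the variant genotype: P(M, G, A) · P(G) = P(M, G) · P(G, A)
    (hci : ∀ kl ij,
      (μ (M ⁻¹' {ij} ∩ G ⁻¹' {kl} ∩ A)).toReal * p kl
        = (μ (M ⁻¹' {ij} ∩ G ⁻¹' {kl})).toReal * (μ (G ⁻¹' {kl} ∩ A)).toReal)
    (ij : Fin 2 × Fin 2) :
    (μ (M ⁻¹' {ij} ∩ A)).toReal / π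
      = q ij + D (0, 0) ij * (πc (0, 0) - πc (0, 1)) / π
          + D (1, 1) ij * (πc (1, 1) - πc (0, 1)) / π :=
  stmt_3_general μ A G M hG π hπdef hπ0 p hp πc hπc hsym q hq D hD hci ij
end

section
/- Under the setting of Lemma 1, the conditional genotype frequencies among controls satisfy P(M_iM_j | U) = q_{ij} + D₁₁ᵢⱼ(π₁₂-π₁₁)/(1-π) + D₂₂ᵢⱼ(π₁₂-π₂₂)/(1-π). -/
/-!
Split the marker event `M_ij ∩ U` along the fibres `G_kl` of the variant genotype. Conditional
independence gives `P(M_ij G_kl U) = P(M_ij G_kl) (1 - π_kl)`, and writing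
`P(M_ij G_kl) = D_klij + p_kl q_ij` the sum becomes `q_ij (1 - π) + ∑ D_klij (1 - π_kl)`.
Since `∑_kl D_klij = 0`, the constant `1` may be replaced by `π₁₂`; the symmetry
`π₁₂ = π₂₁` then kills the two heterozygous terms.
-/

open MeasureTheory Set

theorem sum_add_mul_mul_one_sub {ι R : Type*} [Fintype ι] [CommRing R]
    (D p c : ι → R) (q π t : R) (hp : ∑ i, p i = 1) (hπ : ∑ i, p i * c i = π)
    (hD : ∑ i, D i = 0) :
    ∑ i, (D i + p i * q) * (1 - c i) = q * (1 - π) + ∑ i, D i * (t - c i) := by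
  have hsplit : ∀ i, (D i + p i * q) * (1 - c i)
      = D i * (t - c i) + (1 - t) * D i + q * p i - q * (p i * c i) := fun i => by ring
  simp only [hsplit, Finset.sum_add_distrib, Finset.sum_sub_distrib, ← Finset.mul_sum, hp, hπ,
    hD]
  ring

section

variable {Ω β : Type*} [MeasurableSpace Ω] {μ : Measure Ω}

theorem measureReal_eq_sum_inter_preimage_s4 [Fintype β] [IsFiniteMeasure μ] {f : Ω → β}
    (hf : ∀ b, MeasurableSet (f ⁻¹' {b})) (S : Set Ω) :
    μ.real S = ∑ b, μ.real (S ∩ f ⁻¹' {b}) := by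
  have h := sum_measureReal_preimage_singleton (μ := μ.restrict S) Finset.univ (fun b _ => hf b)
  simp only [Finset.coe_univ, preimage_univ, measureReal_restrict_apply_univ,
    measureReal_restrict_apply (hf _)] at h
  rw [← h]
  exact Finset.sum_congr rfl fun b _ => by rw [inter_comm]

variable [IsFiniteMeasure μ]

theorem measureReal_mul_inter_div_cancel (A F : Set Ω) :
    μ.real F * (μ.real (A ∩ F) / μ.real F) = μ.real (A ∩ F) := by
  rcases eq_or_ne (μ.real F) 0 with hF | hF
  · rw [hF, zero_mul, measureReal_mono_null inter_subset_right hF]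
  · field_simp

theorem measureReal_inter_inter_compl_of_condIndep {S F A : Set Ω} (hA : MeasurableSet A)
    (h : μ.real (S ∩ F ∩ A) * μ.real F = μ.real (S ∩ F) * μ.real (F ∩ A)) :
    μ.real (S ∩ F ∩ Aᶜ) = μ.real (S ∩ F) * (1 - μ.real (A ∩ F) / μ.real F) := by
  have hsplit : μ.real (S ∩ F ∩ Aᶜ) = μ.real (S ∩ F) - μ.real (S ∩ F ∩ A) := by
    rw [← measureReal_inter_add_sdiff (s := S ∩ F) hA, sdiff_eq]
    ring
  rcases eq_or_ne (μ.real F) 0 with hF | hF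
  · have hSF : μ.real (S ∩ F) = 0 := measureReal_mono_null inter_subset_right hF
    rw [hsplit, hSF, measureReal_mono_null inter_subset_left hSF]
    ring
  · rw [hsplit, inter_comm A F]
    field_simp
    linarith

end

theorem stmt_4_general
    {Ω : Type*} [MeasurableSpace Ω] (μ : Measure Ω) [IsProbabilityMeasure μ]
    (A : Set Ω) (hA : MeasurableSet A)
    (G M : Ω → Fin 2 × Fin 2) (hG : Measurable G)
    (π : ℝ) (hπdef : π = (μ A).toReal) (hπ1 : π < 1)
    (p : Fin 2 × Fin 2 → ℝ) (hp : ∀ kl, p kl = (μ (G ⁻¹' {kl})).toReal)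
    (πc : Fin 2 × Fin 2 → ℝ)
    (hπc : ∀ kl, πc kl = (μ (A ∩ G ⁻¹' {kl})).toReal / p kl)
    (hsym : πc (0, 1) = πc (1, 0))
    (q : Fin 2 × Fin 2 → ℝ) (hq : ∀ ij, q ij = (μ (M ⁻¹' {ij})).toReal)
    (D : Fin 2 × Fin 2 → Fin 2 × Fin 2 → ℝ)
    (hD : ∀ kl ij, D kl ij = (μ (G ⁻¹' {kl} ∩ M ⁻¹' {ij})).toReal - p kl * q ij)
    (hci : ∀ kl ij,
      (μ (M ⁻¹' {ij} ∩ G ⁻¹' {kl} ∩ A)).toReal * p kl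
        = (μ (M ⁻¹' {ij} ∩ G ⁻¹' {kl})).toReal * (μ (G ⁻¹' {kl} ∩ A)).toReal)
    (ij : Fin 2 × Fin 2) :
    (μ (M ⁻¹' {ij} ∩ Aᶜ)).toReal / (1 - π)
      = q ij + D (0, 0) ij * (πc (0, 1) - πc (0, 0)) / (1 - π)
          + D (1, 1) ij * (πc (0, 1) - πc (1, 1)) / (1 - π) := by
  have hF : ∀ kl, MeasurableSet (G ⁻¹' {kl}) := fun kl => hG (measurableSet_singleton kl)
  have hfib : ∀ kl, μ.real (M ⁻¹' {ij} ∩ Aᶜ ∩ G ⁻¹' {kl})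
      = (D kl ij + p kl * q ij) * (1 - πc kl) := by
    intro kl
    have hindep := hci kl ij
    rw [hp] at hindep
    rw [inter_right_comm, measureReal_inter_inter_compl_of_condIndep hA hindep, hD, hπc, hp, hq,
      inter_comm (G ⁻¹' _)]
    simp [measureReal_def]
  have hp1 : ∑ kl, p kl = 1 := by
    simpa [hp, measureReal_def] using (measureReal_eq_sum_inter_preimage_s4 (μ := μ) hF univ).symm
  have hpπ : ∑ kl, p kl * πc kl = π := by
    simp only [hp, hπc, hπdef, ← measureReal_def, measureReal_mul_inter_div_cancel]
    exact (measureReal_eq_sum_inter_preimage_s4 hF A).symm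
  have hD0 : ∑ kl, D kl ij = 0 := by
    simp only [hD, Finset.sum_sub_distrib, ← Finset.sum_mul, hp1, one_mul, hq,
      ← measureReal_def, measureReal_eq_sum_inter_preimage_s4 hF (M ⁻¹' {ij}),
      inter_comm (G ⁻¹' _), sub_self]
  have key : μ.real (M ⁻¹' {ij} ∩ Aᶜ)
      = q ij * (1 - π) + ∑ kl, D kl ij * (πc (0, 1) - πc kl) := by
    rw [measureReal_eq_sum_inter_preimage_s4 hF, Finset.sum_congr rfl fun kl _ => hfib kl]
    exact sum_add_mul_mul_one_sub _ _ _ _ _ _ hp1 hpπ hD0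
  rw [← measureReal_def, key]
  simp only [Fintype.sum_prod_type, Fin.sum_univ_two, ← hsym, sub_self, mul_zero, add_zero]
  field_simp [show 1 - π ≠ 0 by linarith]
  ring

/-- Lemma 1 of the paper, control version: conditional marker genotype
frequency among controls U = Aᶜ. -/
theorem stmt_4
    {Ω : Type*} [MeasurableSpace Ω] (μ : Measure Ω) [IsProbabilityMeasure μ]
    (A : Set Ω) (hA : MeasurableSet A)
    (G M : Ω → Fin 2 × Fin 2) (hG : Measurable G) (hM : Measurable M)
    (π : ℝ) (hπdef : π = (μ A).toReal) (hπ0 : 0 < π) (hπ1 : π < 1)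
    (p : Fin 2 × Fin 2 → ℝ) (hp : ∀ kl, p kl = (μ (G ⁻¹' {kl})).toReal)
    (πc : Fin 2 × Fin 2 → ℝ)
    (hπc : ∀ kl, πc kl = (μ (A ∩ G ⁻¹' {kl})).toReal / p kl)
    (hsym : πc (0, 1) = πc (1, 0))
    (q : Fin 2 × Fin 2 → ℝ) (hq : ∀ ij, q ij = (μ (M ⁻¹' {ij})).toReal)
    (D : Fin 2 × Fin 2 → Fin 2 × Fin 2 → ℝ)
    (hD : ∀ kl ij, D kl ij = (μ (G ⁻¹' {kl} ∩ M ⁻¹' {ij})).toReal - p kl * q ij)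
    (hci : ∀ kl ij,
      (μ (M ⁻¹' {ij} ∩ G ⁻¹' {kl} ∩ A)).toReal * p kl
        = (μ (M ⁻¹' {ij} ∩ G ⁻¹' {kl})).toReal * (μ (G ⁻¹' {kl} ∩ A)).toReal)
    (ij : Fin 2 × Fin 2) :
    (μ (M ⁻¹' {ij} ∩ Aᶜ)).toReal / (1 - π)
      = q ij + D (0, 0) ij * (πc (0, 1) - πc (0, 0)) / (1 - π)
          + D (1, 1) ij * (πc (0, 1) - πc (1, 1)) / (1 - π) :=
  stmt_4_general μ A hA G M hG π hπdef hπ1 p hp πc hπc hsym q hq D hD hci ij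
end
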